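/- arXiv:math/0702835 — 2 statements merged into one kernel-verified Lean document; each statement's English description precedes it below -/
import Mathlib

section
/- Let H, H', H₀ be Hilbert spaces, A : H → H' and T' : H' → H' contractions, and R, Q : H₀ → H bounded operators satisfying T'AR = AQ and R*R ≤ Q*Q. Then for every h ∈ H₀ one has ‖D_A Q h‖² ≥ ‖D_{T'} A R h‖² + ‖D_A R h‖², where D_A = (I − A*A)^{1/2} and D_{T'} = (I − T'*T')^{1/2} are the defect operators. -/
open ContinuousLinearMap

/-- The defect operator `D_A = (I - A*A)^{1/2}` of an operator between Hilbert spaces. -/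
noncomputable def defect {H H' : Type*} [NormedAddCommGroup H] [InnerProductSpace ℂ H]
    [CompleteSpace H] [NormedAddCommGroup H'] [InnerProductSpace ℂ H'] [CompleteSpace H']
    (A : H →L[ℂ] H') : H →L[ℂ] H := CFC.sqrt (1 - adjoint A ∘L A)

/-!
Since `D_A` is the positive square root of `I - A*A`, one has `‖D_A x‖² = ‖x‖² - ‖A x‖²`.
With `T' A R h = A Q h` this turns the inequality into
`‖R h‖² - ‖A Q h‖² ≤ ‖Q h‖² - ‖A Q h‖²`, which is `R*R ≤ Q*Q` evaluated at `h`.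
-/

section Loewner

variable {𝕜 E F G : Type*} [RCLike 𝕜]
  [NormedAddCommGroup E] [InnerProductSpace 𝕜 E] [CompleteSpace E]
  [NormedAddCommGroup F] [InnerProductSpace 𝕜 F] [CompleteSpace F]
  [NormedAddCommGroup G] [InnerProductSpace 𝕜 G] [CompleteSpace G]

theorem ContinuousLinearMap.adjoint_comp_self_le_adjoint_comp_self_iff
    (R : E →L[𝕜] F) (Q : E →L[𝕜] G) :
    adjoint R ∘L R ≤ adjoint Q ∘L Q ↔ ∀ x, ‖R x‖ ≤ ‖Q x‖ := by
  have hsa : IsSelfAdjoint (adjoint Q ∘L Q - adjoint R ∘L R) :=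
    (isPositive_adjoint_comp_self Q).isSelfAdjoint.sub
      (isPositive_adjoint_comp_self R).isSelfAdjoint
  simp only [le_def, isPositive_def', hsa, true_and, reApplyInnerSelf, sub_apply, inner_sub_left,
    map_sub, ← apply_norm_sq_eq_inner_adjoint_left, sub_nonneg]
  exact forall_congr' fun x ↦ sq_le_sq₀ (norm_nonneg _) (norm_nonneg _)

theorem ContinuousLinearMap.adjoint_comp_self_le_one {A : E →L[𝕜] F} (hA : ‖A‖ ≤ 1) :
    adjoint A ∘L A ≤ 1 := by
  have h := (adjoint_comp_self_le_adjoint_comp_self_iff A (1 : E →L[𝕜] E)).mpr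
    fun x ↦ A.le_of_opNorm_le hA x |>.trans_eq (one_mul _)
  rwa [← star_eq_adjoint, star_one, ← mul_def, one_mul] at h

end Loewner

section Defect

variable {H H' : Type*} [NormedAddCommGroup H] [InnerProductSpace ℂ H] [CompleteSpace H]
  [NormedAddCommGroup H'] [InnerProductSpace ℂ H'] [CompleteSpace H']

theorem ContinuousLinearMap.norm_sqrt_apply_sq {S : H →L[ℂ] H} (hS : 0 ≤ S) (x : H) :
    ‖CFC.sqrt S x‖ ^ 2 = RCLike.re (inner ℂ (S x) x) := by
  have hadj : adjoint (CFC.sqrt S) = CFC.sqrt S :=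
    isSelfAdjoint_iff'.mp (CFC.sqrt_nonneg S).isSelfAdjoint
  rw [apply_norm_sq_eq_inner_adjoint_left, hadj, ← mul_def, CFC.sqrt_mul_sqrt_self S hS]

theorem norm_defect_apply_sq {A : H →L[ℂ] H'} (hA : ‖A‖ ≤ 1) (x : H) :
    ‖defect A x‖ ^ 2 = ‖x‖ ^ 2 - ‖A x‖ ^ 2 := by
  rw [defect, norm_sqrt_apply_sq (sub_nonneg.mpr (adjoint_comp_self_le_one hA)), sub_apply,
    inner_sub_left, map_sub, one_apply_eq_self, apply_norm_sq_eq_inner_adjoint_left,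
    inner_self_eq_norm_sq]

end Defect

theorem stmt_0 {H H' H₀ : Type*}
    [NormedAddCommGroup H] [InnerProductSpace ℂ H] [CompleteSpace H]
    [NormedAddCommGroup H'] [InnerProductSpace ℂ H'] [CompleteSpace H']
    [NormedAddCommGroup H₀] [InnerProductSpace ℂ H₀] [CompleteSpace H₀]
    (A : H →L[ℂ] H') (T' : H' →L[ℂ] H') (hA : ‖A‖ ≤ 1) (hT' : ‖T'‖ ≤ 1)
    (R Q : H₀ →L[ℂ] H)
    (hcomm : T' ∘L A ∘L R = A ∘L Q)
    (hRQ : adjoint R ∘L R ≤ adjoint Q ∘L Q) :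
    ∀ h : H₀,
      ‖defect T' (A (R h))‖ ^ 2 + ‖defect A (R h)‖ ^ 2 ≤ ‖defect A (Q h)‖ ^ 2 := by
  intro h
  have hTAR : T' (A (R h)) = A (Q h) := congr($hcomm h)
  have hRh : ‖R h‖ ≤ ‖Q h‖ := (adjoint_comp_self_le_adjoint_comp_self_iff R Q).mp hRQ h
  rw [norm_defect_apply_sq hA, norm_defect_apply_sq hA, norm_defect_apply_sq hT', hTAR]
  nlinarith [norm_nonneg (R h)]
end

section
/- Let T be a contraction on a Hilbert space H. Define the operator U' on H ⊕ ℓ²(ℕ, D̄_T) by U'(h, (f₀, f₁, f₂, …)) = (T h, (D_T h, f₀, f₁, …)), where D_T = (I − T*T)^{1/2} and D̄_T is the closure of its range. Then U' is an isometry, and the compression of U' to H equals T (i.e., P_H U'|_H = T, where P_H is the orthogonal projection onto the summand H). -/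
/-! Since `D_T² = I - T*T`, the defect operator satisfies `‖T h‖² + ‖D_T h‖² = ‖h‖²`, and the
shift inserting `D_T h` in front of `f` has `ℓ²`-norm squared `‖D_T h‖² + ‖f‖²`. Adding the two,
`‖U'(h, f)‖² = ‖h‖² + ‖f‖²`. The compression identity is the first coordinate of `U'`. -/

open ContinuousLinearMap

/-- The defect space `D̄_Γ`: the closure of the range of the defect operator. -/
noncomputable def defectSpace {H H' : Type*} [NormedAddCommGroup H] [InnerProductSpace ℂ H]
    [CompleteSpace H] [NormedAddCommGroup H'] [InnerProductSpace ℂ H'] [CompleteSpace H']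
    (A : H →L[ℂ] H') : Submodule ℂ H := (LinearMap.range (defect A : H →ₗ[ℂ] H)).topologicalClosure

namespace ContinuousLinearMap

variable {𝕜 E F : Type*} [RCLike 𝕜] [NormedAddCommGroup E] [InnerProductSpace 𝕜 E]
  [CompleteSpace E] [NormedAddCommGroup F] [InnerProductSpace 𝕜 F] [CompleteSpace F]

theorem adjoint_comp_self_le_one_s10 {A : E →L[𝕜] F} (hA : ‖A‖ ≤ 1) : adjoint A ∘L A ≤ 1 := by
  rw [le_def, isPositive_def']
  refine ⟨.sub (.one _) (isPositive_adjoint_comp_self A).isSelfAdjoint, fun x => ?_⟩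
  have hx : ‖A x‖ ≤ ‖x‖ := by simpa using A.le_of_opNorm_le hA x
  rw [reApplyInnerSelf, sub_apply, inner_sub_left, map_sub, ← apply_norm_sq_eq_inner_adjoint_left,
    one_apply_eq_self, inner_self_eq_norm_sq, sub_nonneg]
  gcongr

end ContinuousLinearMap

section Defect

variable {H H' : Type*} [NormedAddCommGroup H] [InnerProductSpace ℂ H] [CompleteSpace H]
  [NormedAddCommGroup H'] [InnerProductSpace ℂ H'] [CompleteSpace H']

theorem adjoint_defect_comp_defect {A : H →L[ℂ] H'} (hA : ‖A‖ ≤ 1) :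
    adjoint (defect A) ∘L defect A = 1 - adjoint A ∘L A := by
  rw [← star_eq_adjoint, (CFC.sqrt_nonneg _).isSelfAdjoint.star_eq, ← mul_def, defect,
    CFC.sqrt_mul_sqrt_self _ (sub_nonneg.mpr (adjoint_comp_self_le_one_s10 hA))]

theorem norm_sq_apply_add_norm_sq_defect_apply {A : H →L[ℂ] H'} (hA : ‖A‖ ≤ 1) (h : H) :
    ‖A h‖ ^ 2 + ‖defect A h‖ ^ 2 = ‖h‖ ^ 2 := by
  rw [apply_norm_sq_eq_inner_adjoint_left (defect A), adjoint_defect_comp_defect hA, sub_apply,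
    inner_sub_left, map_sub, ← apply_norm_sq_eq_inner_adjoint_left, one_apply_eq_self,
    inner_self_eq_norm_sq]
  ring

end Defect

theorem lp.norm_sq_eq_norm_sq_zero_add_of_shift {E : Type*} [NormedAddCommGroup E]
    {f g : lp (fun _ : ℕ => E) 2} (hs : ∀ n, g (n + 1) = f n) :
    ‖g‖ ^ 2 = ‖g 0‖ ^ 2 + ‖f‖ ^ 2 := by
  have h2 : (0 : ℝ) < (2 : ENNReal).toReal := by norm_num
  have hg := lp.norm_rpow_eq_tsum h2 g
  have hf := lp.norm_rpow_eq_tsum h2 f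
  have hsplit := ((lp.memℓp g).summable h2).tsum_eq_zero_add
  simp only [ENNReal.toReal_ofNat, Real.rpow_two] at hg hf hsplit
  rw [hg, hf, hsplit]
  simp only [hs]

theorem stmt_10 {H : Type*}
    [NormedAddCommGroup H] [InnerProductSpace ℂ H] [CompleteSpace H]
    (T : H →L[ℂ] H) (hT : ‖T‖ ≤ 1)
    (hmem : ∀ h : H, defect T h ∈ defectSpace T)
    (U' : WithLp 2 (H × lp (fun _ : ℕ => (defectSpace T)) 2) →L[ℂ]
          WithLp 2 (H × lp (fun _ : ℕ => (defectSpace T)) 2))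
    (hU' : ∀ x : WithLp 2 (H × lp (fun _ : ℕ => (defectSpace T)) 2),
      ((WithLp.equiv 2 _) (U' x)).1 = T ((WithLp.equiv 2 _) x).1 ∧
      ((WithLp.equiv 2 _) (U' x)).2 0 = ⟨defect T ((WithLp.equiv 2 _) x).1,
        hmem ((WithLp.equiv 2 _) x).1⟩ ∧
      ∀ n : ℕ, ((WithLp.equiv 2 _) (U' x)).2 (n + 1) = ((WithLp.equiv 2 _) x).2 n) :
    (∀ x, ‖U' x‖ = ‖x‖) ∧
    ∀ h : H, ((WithLp.equiv 2 _) (U' ((WithLp.equiv 2 _).symm (h, 0)))).1 = T h := by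
  refine ⟨fun x => ?_, fun h => (hU' _).1⟩
  obtain ⟨hfst, hzero, hshift⟩ := hU' x
  simp only [WithLp.equiv_apply, WithLp.ofLp_fst, WithLp.ofLp_snd] at hfst hzero hshift
  have hsq : ‖U' x‖ ^ 2 = ‖x‖ ^ 2 := by
    rw [WithLp.prod_norm_sq_eq_of_L2, WithLp.prod_norm_sq_eq_of_L2,
      lp.norm_sq_eq_norm_sq_zero_add_of_shift hshift, hzero, hfst, Submodule.coe_norm, ← add_assoc,
      norm_sq_apply_add_norm_sq_defect_apply hT]
  exact (pow_left_inj₀ (norm_nonneg _) (norm_nonneg _) two_ne_zero).mp hsq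
end
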